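/- For any unit-trace positive definite symmetric matrix B and any vectors v_0, …, v_K ∈ ℝ^n, tr(√(δ² I + Σ_{k=0}^K v_k v_k^T)) ≤ δ n + √(Σ_{k=0}^K ‖v_k‖²_{B^{-1}}), where ‖v‖²_{B^{-1}} = ⟨v, B^{-1} v⟩ and n is the dimension. -/

import Mathlib

open Matrix
open scoped Classical

/-- The positive semidefinite square root of a matrix (zero if not PSD). -/
noncomputable def sqrtM {n : ℕ} (A : Matrix (Fin n) (Fin n) ℝ) : Matrix (Fin n) (Fin n) ℝ :=
  if h : A.PosSemidef then
    (h.1.eigenvectorUnitary : Matrix (Fin n) (Fin n) ℝ) *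
      diagonal ((↑) ∘ (fun i => Real.sqrt (h.1.eigenvalues i))) *
      (star h.1.eigenvectorUnitary : Matrix (Fin n) (Fin n) ℝ)
  else 0

/-- Euclidean norm of a vector. -/
noncomputable def euclNorm {n : ℕ} (v : Fin n → ℝ) : ℝ := Real.sqrt (v ⬝ᵥ v)

/-- The ℓ₂ operator (spectral) norm of a matrix. -/
noncomputable def opNorm {n : ℕ} (A : Matrix (Fin n) (Fin n) ℝ) : ℝ :=
  ⨆ u : {u : Fin n → ℝ // euclNorm u ≤ 1}, euclNorm (A *ᵥ u)

/-!
Diagonalise `A = δ² I + S`, `S = ∑ₖ vₖ vₖᵀ`, in an orthonormal eigenbasis `(uᵢ)`. Then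
`S uᵢ = μᵢ uᵢ` with `μᵢ = λᵢ - δ² ≥ 0`, and `tr √A = ∑ᵢ √(δ² + μᵢ) ≤ δ n + ∑ᵢ √μᵢ`.
With `bᵢ = ⟨uᵢ, B uᵢ⟩` and `cᵢ = ⟨uᵢ, B⁻¹ uᵢ⟩` one has `bᵢ cᵢ ≥ 1` (Cauchy–Schwarz in the
`B`-inner product), `∑ᵢ bᵢ = tr B = 1` and `∑ᵢ μᵢ cᵢ = tr (B⁻¹ S) = ∑ₖ ⟨vₖ, B⁻¹ vₖ⟩`, so
`∑ᵢ √μᵢ ≤ ∑ᵢ √bᵢ √(μᵢ cᵢ) ≤ √(∑ᵢ bᵢ) √(∑ᵢ μᵢ cᵢ)` by Cauchy–Schwarz once more.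
-/

theorem Real.sqrt_sq_add_le {a : ℝ} (ha : 0 ≤ a) (b : ℝ) : √(a ^ 2 + b) ≤ a + √b := by
  rcases le_or_gt 0 b with hb | hb
  · rw [Real.sqrt_le_left (by positivity)]
    nlinarith [Real.sq_sqrt hb, Real.sqrt_nonneg b]
  · rw [Real.sqrt_eq_zero_of_nonpos hb.le, add_zero]
    exact Real.sqrt_le_iff.mpr ⟨ha, by linarith⟩

theorem Real.sum_sqrt_le_of_one_le_mul {ι : Type*} (s : Finset ι) {μ b c : ι → ℝ}
    (hμ : ∀ i, 0 ≤ μ i) (hb : ∀ i, 0 ≤ b i) (hbc : ∀ i, 1 ≤ b i * c i) :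
    ∑ i ∈ s, √(μ i) ≤ √(∑ i ∈ s, b i) * √(∑ i ∈ s, μ i * c i) := by
  have hc : ∀ i, 0 ≤ c i := fun i => by nlinarith [hb i, hbc i]
  calc ∑ i ∈ s, √(μ i) ≤ ∑ i ∈ s, √(b i) * √(μ i * c i) := by
        gcongr with i
        rw [← Real.sqrt_mul (hb i)]
        exact Real.sqrt_le_sqrt (by nlinarith [hμ i, hbc i])
    _ ≤ √(∑ i ∈ s, b i) * √(∑ i ∈ s, μ i * c i) :=
        Real.sum_sqrt_mul_sqrt_le s hb fun i => mul_nonneg (hμ i) (hc i)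

theorem Matrix.trace_mul_vecMulVec_self {ι : Type*} [Fintype ι] (X : Matrix ι ι ℝ) (w : ι → ℝ) :
    (X * vecMulVec w w).trace = w ⬝ᵥ (X *ᵥ w) := by
  rw [mul_vecMulVec, trace_vecMulVec, dotProduct_comm]

section

variable {ι : Type*} [Fintype ι] [DecidableEq ι]

theorem Matrix.trace_eq_sum_dotProduct_mulVec (X : Matrix ι ι ℝ)
    (u : OrthonormalBasis ι ℝ (EuclideanSpace ℝ ι)) :
    X.trace = ∑ i, ⇑(u i) ⬝ᵥ (X *ᵥ ⇑(u i)) := by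
  have hX : LinearMap.trace ℝ _ (toEuclideanLin X) = X.trace := by
    rw [toEuclideanLin_eq_toLin_orthonormal, trace_toLin_eq]
  simpa [hX, EuclideanSpace.inner_eq_star_dotProduct, dotProduct_comm] using
    LinearMap.trace_eq_sum_inner (toEuclideanLin X) u

/-- Cauchy–Schwarz for the inner product `x ⬝ᵥ B *ᵥ y`, applied to `w` and `B⁻¹ *ᵥ w`. -/
theorem Matrix.PosDef.sq_dotProduct_self_le {B : Matrix ι ι ℝ} (hB : B.PosDef) (w : ι → ℝ) :
    (w ⬝ᵥ w) ^ 2 ≤ (w ⬝ᵥ (B *ᵥ w)) * (w ⬝ᵥ (B⁻¹ *ᵥ w)) := by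
  set y := B⁻¹ *ᵥ w
  have hBy : B *ᵥ y = w := by
    rw [mulVec_mulVec, mul_nonsing_inv _ ((isUnit_iff_isUnit_det B).mp hB.isUnit), one_mulVec]
  have hyB : y ⬝ᵥ (B *ᵥ w) = w ⬝ᵥ w := by
    rw [dotProduct_mulVec, ← mulVec_transpose, ← conjTranspose_eq_transpose_of_trivial, hB.1, hBy]
  have hquad : ∀ t : ℝ, 0 ≤ (w ⬝ᵥ (B *ᵥ w)) * (t * t) + (-2 * (w ⬝ᵥ w)) * t + w ⬝ᵥ y := by
    intro t
    have := hB.posSemidef.dotProduct_mulVec_nonneg (t • w - y)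
    simp only [star_trivial, mulVec_sub, mulVec_smul, hBy, dotProduct_sub, sub_dotProduct,
      smul_dotProduct, dotProduct_smul, smul_eq_mul, hyB, dotProduct_comm y w] at this
    linarith
  have := discrim_le_zero hquad
  rw [discrim] at this
  linarith

theorem Matrix.PosSemidef.sum_sqrt_eigenvalues_le {S B : Matrix ι ι ℝ}
    (hS : S.PosSemidef) (hB : B.PosDef) (u : OrthonormalBasis ι ℝ (EuclideanSpace ℝ ι))
    {μ : ι → ℝ} (hSu : ∀ i, S *ᵥ ⇑(u i) = μ i • ⇑(u i)) :
    ∑ i, √(μ i) ≤ √B.trace * √(B⁻¹ * S).trace := by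
  have hunit : ∀ i, ⇑(u i) ⬝ᵥ ⇑(u i) = 1 := fun i => by
    have h := real_inner_self_eq_norm_sq (u i)
    rwa [u.orthonormal.1 i, EuclideanSpace.inner_eq_star_dotProduct, star_trivial, one_pow] at h
  have htrB := B.trace_eq_sum_dotProduct_mulVec u
  have htrBS : (B⁻¹ * S).trace = ∑ i, μ i * (⇑(u i) ⬝ᵥ (B⁻¹ *ᵥ ⇑(u i))) := by
    simp only [(B⁻¹ * S).trace_eq_sum_dotProduct_mulVec u, ← mulVec_mulVec, hSu, mulVec_smul,
      dotProduct_smul, smul_eq_mul]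
  rw [htrB, htrBS]
  refine Real.sum_sqrt_le_of_one_le_mul _ (fun i => ?_) (fun i => ?_) (fun i => ?_)
  · simpa [hSu, hunit] using hS.dotProduct_mulVec_nonneg (u i)
  · simpa using hB.posSemidef.dotProduct_mulVec_nonneg (u i)
  · simpa [hunit] using hB.sq_dotProduct_self_le (u i)

end

theorem trace_sqrtM {n : ℕ} {A : Matrix (Fin n) (Fin n) ℝ} (hA : A.PosSemidef) :
    (sqrtM A).trace = ∑ i, √(hA.1.eigenvalues i) := by
  rw [sqrtM, dif_pos hA, trace_mul_cycle, Unitary.coe_star_mul_self, one_mul, trace_diagonal]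
  rfl

theorem trace_sqrt_accumulator_bound {n K : ℕ} {δ : ℝ} (hδ : 0 < δ)
    {B : Matrix (Fin n) (Fin n) ℝ} (hB : B.PosDef) (htr : B.trace = 1)
    (v : ℕ → (Fin n → ℝ)) :
    (sqrtM (δ ^ 2 • (1 : Matrix (Fin n) (Fin n) ℝ)
        + ∑ k ∈ Finset.range (K + 1), vecMulVec (v k) (v k))).trace
      ≤ δ * n + Real.sqrt (∑ k ∈ Finset.range (K + 1), v k ⬝ᵥ (B⁻¹ *ᵥ v k)) := by
  set S := ∑ k ∈ Finset.range (K + 1), vecMulVec (v k) (v k)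
  have hS : S.PosSemidef :=
    posSemidef_sum _ fun k _ => by simpa using posSemidef_vecMulVec_self_star (v k)
  have hA : (δ ^ 2 • (1 : Matrix (Fin n) (Fin n) ℝ) + S).PosSemidef :=
    (PosSemidef.one.smul (sq_nonneg δ)).add hS
  set eig := hA.1.eigenvalues
  have hSu : ∀ i, S *ᵥ ⇑(hA.1.eigenvectorBasis i)
      = (eig i - δ ^ 2) • ⇑(hA.1.eigenvectorBasis i) := by
    intro i
    have h := hA.1.mulVec_eigenvectorBasis i
    rw [add_mulVec, smul_mulVec, one_mulVec] at h
    rw [sub_smul, ← h, add_sub_cancel_left]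
  have htrS : (B⁻¹ * S).trace = ∑ k ∈ Finset.range (K + 1), v k ⬝ᵥ (B⁻¹ *ᵥ v k) := by
    simp only [S, Finset.mul_sum, trace_sum, trace_mul_vecMulVec_self]
  calc (sqrtM (δ ^ 2 • 1 + S)).trace = ∑ i, √(eig i) := trace_sqrtM hA
    _ ≤ ∑ i, (δ + √(eig i - δ ^ 2)) := by
        gcongr with i
        nth_rw 1 [← add_sub_cancel (δ ^ 2) (eig i)]
        exact Real.sqrt_sq_add_le hδ.le _
    _ = δ * n + ∑ i, √(eig i - δ ^ 2) := by simp [Finset.sum_add_distrib, mul_comm]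
    _ ≤ δ * n + √B.trace * √(B⁻¹ * S).trace := by
        gcongr
        exact hS.sum_sqrt_eigenvalues_le hB _ hSu
    _ = _ := by rw [htr, htrS, Real.sqrt_one, one_mul]
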